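/- arXiv:1809.10145 — 5 statements merged into one kernel-verified Lean document; each statement's English description precedes it below -/
import Mathlib

section
/- For every integer i ≥ 0, every point a ∈ F_i, and every point b ∈ E_i, either d(a,b) ≤ Q^i or d(a,b) > Q^{i+1}/3. -/
open scoped ENNReal

/-- A level-`n` chunk of the error configuration `ε`: a level-`0` chunk is a singleton `{x}`
with `x ∈ ε`; a level-`(n+1)` chunk is a disjoint union of two level-`n` chunks whose
diameter is at most `Q ^ (n+1) / 2`. -/
def IsChunk {X : Type*} [MetricSpace X] (Q : ℝ) (ε : Set X) : ℕ → Set X → Prop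
  | 0, C => ∃ x ∈ ε, C = {x}
  | n + 1, C => ∃ A B : Set X, IsChunk Q ε n A ∧ IsChunk Q ε n B ∧ Disjoint A B ∧
      C = A ∪ B ∧ Metric.diam C ≤ Q ^ (n + 1) / 2

/-- `E_n`: the union of all level-`n` chunks of `ε`. -/
def Elevel {X : Type*} [MetricSpace X] (Q : ℝ) (ε : Set X) (n : ℕ) : Set X :=
  {x | ∃ C : Set X, IsChunk Q ε n C ∧ x ∈ C}

/-- `F_i = E_i \ E_{i+1}`. -/
def Flevel {X : Type*} [MetricSpace X] (Q : ℝ) (ε : Set X) (i : ℕ) : Set X :=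
  Elevel Q ε i \ Elevel Q ε (i + 1)

/-
A point `a ∈ F_i` lies in a level-`i` chunk `A`, and `b ∈ E_i` in a level-`i` chunk `B`, both of
diameter at most `Q^i/2`. If `A` and `B` meet, then `d(a,b) ≤ diam A + diam B ≤ Q^i`. If they are
disjoint and `d(a,b) ≤ Q^{i+1}/3`, then `diam (A ∪ B) ≤ Q^i + Q^{i+1}/3 ≤ Q^{i+1}/2` because
`Q ≥ 6`, so `A ∪ B` is a level-`(i+1)` chunk containing `a`, contradicting `a ∉ E_{i+1}`.
-/

namespace IsChunk

variable {X : Type*} [MetricSpace X] {Q : ℝ} {ε : Set X}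

theorem finite : ∀ {n : ℕ} {C : Set X}, IsChunk Q ε n C → C.Finite
  | 0, _, ⟨_, _, hC⟩ => hC ▸ Set.finite_singleton _
  | _ + 1, _, ⟨_, _, hA, hB, _, hC, _⟩ => hC ▸ hA.finite.union hB.finite

theorem diam_le {n : ℕ} {C : Set X} (h : IsChunk Q ε n C) : Metric.diam C ≤ Q ^ n / 2 := by
  cases n with
  | zero =>
    obtain ⟨x, -, rfl⟩ := h
    norm_num
  | succ n =>
    obtain ⟨-, -, -, -, -, -, hdiam⟩ := h
    exact hdiam

theorem dist_le_of_not_disjoint {n : ℕ} {A B : Set X} (hA : IsChunk Q ε n A)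
    (hB : IsChunk Q ε n B) (hAB : ¬Disjoint A B) {a b : X} (ha : a ∈ A) (hb : b ∈ B) :
    dist a b ≤ Q ^ n := by
  obtain ⟨c, hcA, hcB⟩ := Set.not_disjoint_iff.mp hAB
  calc dist a b ≤ dist a c + dist c b := dist_triangle a c b
    _ ≤ Metric.diam A + Metric.diam B :=
        add_le_add (Metric.dist_le_diam_of_mem hA.finite.isBounded ha hcA)
          (Metric.dist_le_diam_of_mem hB.finite.isBounded hcB hb)
    _ ≤ Q ^ n / 2 + Q ^ n / 2 := add_le_add hA.diam_le hB.diam_le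
    _ = Q ^ n := add_halves _

theorem union_of_dist_le (hQ : 6 ≤ Q) {n : ℕ} {A B : Set X} (hA : IsChunk Q ε n A)
    (hB : IsChunk Q ε n B) (hAB : Disjoint A B) {a b : X} (ha : a ∈ A) (hb : b ∈ B)
    (hab : dist a b ≤ Q ^ (n + 1) / 3) : IsChunk Q ε (n + 1) (A ∪ B) := by
  refine ⟨A, B, hA, hB, hAB, rfl, ?_⟩
  have hQn : 0 ≤ Q ^ n := pow_nonneg (by linarith) n
  calc Metric.diam (A ∪ B) ≤ Metric.diam A + dist a b + Metric.diam B :=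
        Metric.diam_union ha hb
    _ ≤ Q ^ n / 2 + Q ^ (n + 1) / 3 + Q ^ n / 2 := by
        gcongr
        exacts [hA.diam_le, hB.diam_le]
    _ ≤ Q ^ (n + 1) / 2 := by rw [pow_succ]; nlinarith

end IsChunk

theorem statement0_general {X : Type*} [MetricSpace X] (Q : ℝ) (hQ : 6 ≤ Q)
    (ε : Set X) (i : ℕ) (a b : X)
    (ha : a ∈ Flevel Q ε i) (hb : b ∈ Elevel Q ε i) :
    dist a b ≤ Q ^ i ∨ dist a b > Q ^ (i + 1) / 3 := by
  obtain ⟨⟨A, hA, haA⟩, ha_not_mem⟩ := ha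
  obtain ⟨B, hB, hbB⟩ := hb
  refine (le_or_gt (dist a b) (Q ^ (i + 1) / 3)).imp (fun hab => ?_) id
  by_cases hAB : Disjoint A B
  · exact absurd ⟨A ∪ B, hA.union_of_dist_le hQ hB hAB haA hbB hab, Or.inl haA⟩ ha_not_mem
  · exact hA.dist_le_of_not_disjoint hB hAB haA hbB

theorem statement0 {X : Type*} [MetricSpace X] (Q : ℝ) (hQ : 6 ≤ Q)
    (ε : Set X) (hε : ε.Finite) (i : ℕ) (a b : X)
    (ha : a ∈ Flevel Q ε i) (hb : b ∈ Elevel Q ε i) :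
    dist a b ≤ Q ^ i ∨ dist a b > Q ^ (i + 1) / 3 :=
  statement0_general Q hQ ε i a b ha hb
end

section
/- For every integer i ≥ 0, if M ⊆ F_i is Q^i-connected, then diam(M) ≤ Q^i. -/
open scoped ENNReal

/-- The distance `d(U,W) = inf {d(u,w) : u ∈ U, w ∈ W}` between two sets
(valued in `ℝ≥0∞`, so that the infimum over an empty family is `∞`). -/
noncomputable def setEDist {X : Type*} [MetricSpace X] (U W : Set X) : ℝ≥0∞ :=
  ⨅ u ∈ U, ⨅ w ∈ W, edist u w

/-- `M` is `l`-connected: it is nonempty and cannot be partitioned into two nonempty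
disjoint subsets that are more than `l` apart. -/
def IsLConnected {X : Type*} [MetricSpace X] (l : ℝ) (M : Set X) : Prop :=
  M.Nonempty ∧ ∀ M₁ M₂ : Set X, M₁.Nonempty → M₂.Nonempty → Disjoint M₁ M₂ →
    M₁ ∪ M₂ = M → setEDist M₁ M₂ ≤ ENNReal.ofReal l

lemma chunk_subset {X : Type*} [MetricSpace X] (Q : ℝ) (ε : Set X) :
    ∀ n C, IsChunk Q ε n C → C ⊆ ε := by
  intro n
  induction n with
  | zero => rintro C ⟨x, hx, rfl⟩; simpa
  | succ n ih => rintro C ⟨A, B, hA, hB, -, rfl, -⟩; exact Set.union_subset (ih A hA) (ih B hB)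

lemma chunk_diam {X : Type*} [MetricSpace X] {Q : ℝ} (hQ : 6 ≤ Q) (ε : Set X) :
    ∀ n C, IsChunk Q ε n C → Metric.diam C ≤ Q ^ n / 2 := by
  intro n C h
  cases n with
  | zero =>
    obtain ⟨x, hx, rfl⟩ := h
    simp [Metric.diam_singleton]
  | succ n =>
    obtain ⟨A, B, hA, hB, hd, rfl, hdiam⟩ := h
    exact hdiam

lemma dist_dichotomy {X : Type*} [MetricSpace X] {Q : ℝ} (hQ : 6 ≤ Q) {ε : Set X}
    (hε : ε.Finite) {i : ℕ} {a b : X} (ha : a ∈ Flevel Q ε i) (hb : b ∈ Flevel Q ε i) :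
    dist a b ≤ Q ^ i ∨ 2 * Q ^ i < dist a b := by
  simp only [Flevel, Elevel, Set.mem_diff, Set.mem_setOf_eq] at ha hb
  obtain ⟨⟨A, hA, haA⟩, haE⟩ := ha
  obtain ⟨⟨B, hB, hbB⟩, hbE⟩ := hb
  have hQ0 : (0:ℝ) < Q := by linarith
  have hQi : (0:ℝ) < Q ^ i := pow_pos hQ0 i
  have hAd : Metric.diam A ≤ Q ^ i / 2 := chunk_diam hQ ε i A hA
  have hBd : Metric.diam B ≤ Q ^ i / 2 := chunk_diam hQ ε i B hB
  have hAb : Bornology.IsBounded A := (hε.subset (chunk_subset Q ε i A hA)).isBounded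
  have hBb : Bornology.IsBounded B := (hε.subset (chunk_subset Q ε i B hB)).isBounded
  by_cases hdisj : Disjoint A B
  · right
    have hnot : ¬ Metric.diam (A ∪ B) ≤ Q ^ (i + 1) / 2 := by
      intro hle
      exact haE ⟨A ∪ B, ⟨A, B, hA, hB, hdisj, rfl, hle⟩, Or.inl haA⟩
    have h2 : Q ^ (i + 1) / 2 < Metric.diam (A ∪ B) := lt_of_not_ge hnot
    have h1 : Metric.diam (A ∪ B) ≤ Metric.diam A + dist a b + Metric.diam B :=
      Metric.diam_union haA hbB
    have hpow : Q ^ (i + 1) = Q * Q ^ i := by ring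
    nlinarith
  · left
    obtain ⟨p, hpA, hpB⟩ := Set.not_disjoint_iff.mp hdisj
    have ht := dist_triangle a p b
    have h1 : dist a p ≤ Metric.diam A := Metric.dist_le_diam_of_mem hAb haA hpA
    have h2 : dist p b ≤ Metric.diam B := Metric.dist_le_diam_of_mem hBb hpB hbB
    linarith

theorem statement1 {X : Type*} [MetricSpace X] (Q : ℝ) (hQ : 6 ≤ Q)
    (ε : Set X) (hε : ε.Finite) (i : ℕ) (M : Set X)
    (hM : M ⊆ Flevel Q ε i) (hconn : IsLConnected (Q ^ i) M) :
    Metric.diam M ≤ Q ^ i := by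
  have hQ0 : (0:ℝ) < Q := by linarith
  have hQi : (0:ℝ) < Q ^ i := pow_pos hQ0 i
  obtain ⟨hne, hpart⟩ := hconn
  obtain ⟨y, hy⟩ := hne
  have key : ∀ z ∈ M, dist y z ≤ Q ^ i := by
    intro z hz
    by_contra hgt
    push_neg at hgt
    set M₁ : Set X := {m ∈ M | dist y m ≤ Q ^ i} with hM1
    set M₂ : Set X := {m ∈ M | ¬ dist y m ≤ Q ^ i} with hM2
    have h1ne : M₁.Nonempty := ⟨y, hy, by simp [le_of_lt hQi]⟩
    have h2ne : M₂.Nonempty := ⟨z, hz, not_le.mpr hgt⟩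
    have hdisj : Disjoint M₁ M₂ := by
      rw [Set.disjoint_left]
      rintro m ⟨-, hm1⟩ ⟨-, hm2⟩
      exact hm2 hm1
    have hunion : M₁ ∪ M₂ = M := by
      ext m
      constructor
      · rintro (⟨hm, -⟩ | ⟨hm, -⟩) <;> exact hm
      · intro hm
        by_cases h : dist y m ≤ Q ^ i
        · exact Or.inl ⟨hm, h⟩
        · exact Or.inr ⟨hm, h⟩
    have hle := hpart M₁ M₂ h1ne h2ne hdisj hunion
    have hlow : ENNReal.ofReal (2 * Q ^ i) ≤ setEDist M₁ M₂ := by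
      refine le_iInf₂ fun u hu => le_iInf₂ fun w hw => ?_
      obtain ⟨huM, hu1⟩ := hu
      obtain ⟨hwM, hw2⟩ := hw
      have hyw : 2 * Q ^ i < dist y w := by
        rcases dist_dichotomy hQ hε (hM hy) (hM hwM) with h | h
        · exact absurd h hw2
        · exact h
      have huw : Q ^ i < dist u w := by
        linarith [dist_triangle y u w]
      have huw2 : 2 * Q ^ i < dist u w := by
        rcases dist_dichotomy hQ hε (hM huM) (hM hwM) with h | h
        · linarith
        · exact h
      rw [edist_dist]
      exact ENNReal.ofReal_le_ofReal (le_of_lt huw2)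
    have : (2 : ℝ) * Q ^ i ≤ Q ^ i := by
      have := le_trans hlow hle
      rwa [ENNReal.ofReal_le_ofReal_iff (le_of_lt hQi)] at this
    linarith
  refine Metric.diam_le_of_forall_dist_le (le_of_lt hQi) fun a ha b hb => ?_
  rcases dist_dichotomy hQ hε (hM ha) (hM hb) with h | h
  · exact h
  · have h1 := key a ha
    have h2 := key b hb
    linarith [dist_triangle a y b, dist_comm a y]
end

section
/- For every integer i ≥ 0, suppose M ⊆ F_i is Q^i-connected and is maximal among Q^i-connected subsets of E_i (i.e., no Q^i-connected subset of E_i strictly contains M). Then every point b ∈ E_i \ M satisfies d(b,M) > Q^{i+1}/3; in particular d(M, E_i \ M) > Q^{i+1}/3. -/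
open scoped ENNReal

/-!
Let `b ∈ E_i \ M` and `x ∈ M` with `d(b, x) ≤ Q^{i+1}/3`, and pick level-`i` chunks `C ∋ b` and
`D ∋ x`, each of diameter at most `Q^i/2`. If `C` and `D` are disjoint, then
`diam (C ∪ D) ≤ Q^i + Q^{i+1}/3 ≤ Q^{i+1}/2` because `Q ≥ 6`, so `C ∪ D` is a level-`(i+1)` chunk
and `x ∈ E_{i+1}`, contradicting `M ⊆ F_i`. Otherwise `d(b, x) ≤ diam C + diam D ≤ Q^i`, so
`insert b M` is still `Q^i`-connected, contradicting maximality. Finiteness of `ε` makes the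
distances between subsets of `E_i` attained, which turns these pointwise bounds into the claim.
-/

section Chunks

variable {X : Type*} [MetricSpace X] {Q : ℝ} {ε : Set X}

theorem IsChunk.subset : ∀ {n : ℕ} {C : Set X}, IsChunk Q ε n C → C ⊆ ε
  | 0, _, ⟨_, hx, hC⟩ => hC ▸ Set.singleton_subset_iff.mpr hx
  | _ + 1, _, ⟨_, _, hA, hB, _, hC, _⟩ => hC ▸ Set.union_subset hA.subset hB.subset

theorem IsChunk.diam_le_s2 : ∀ {n : ℕ} {C : Set X}, IsChunk Q ε n C → Metric.diam C ≤ Q ^ n / 2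
  | 0, _, ⟨_, _, hC⟩ => by simp [hC]
  | _ + 1, _, ⟨_, _, _, _, _, _, hd⟩ => hd

theorem Elevel_subset (n : ℕ) : Elevel Q ε n ⊆ ε :=
  fun _ ⟨_, hC, hx⟩ => hC.subset hx

theorem IsChunk.dist_le_of_not_disjoint_s2 (hε : ε.Finite) {n : ℕ} {C D : Set X}
    (hC : IsChunk Q ε n C) (hD : IsChunk Q ε n D) (hCD : ¬Disjoint C D) {b x : X}
    (hb : b ∈ C) (hx : x ∈ D) : dist b x ≤ Q ^ n := by
  obtain ⟨y, hyC, hyD⟩ := Set.not_disjoint_iff.mp hCD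
  calc dist b x ≤ dist b y + dist y x := dist_triangle b y x
    _ ≤ Metric.diam C + Metric.diam D :=
      add_le_add (Metric.dist_le_diam_of_mem (hε.subset hC.subset).isBounded hb hyC)
        (Metric.dist_le_diam_of_mem (hε.subset hD.subset).isBounded hyD hx)
    _ ≤ Q ^ n := by linarith [hC.diam_le_s2, hD.diam_le_s2]

theorem IsChunk.union_of_disjoint (hQ : 6 ≤ Q) {n : ℕ} {C D : Set X}
    (hC : IsChunk Q ε n C) (hD : IsChunk Q ε n D) (hCD : Disjoint C D) {b x : X}
    (hb : b ∈ C) (hx : x ∈ D) (hbx : dist b x ≤ Q ^ (n + 1) / 3) :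
    IsChunk Q ε (n + 1) (C ∪ D) := by
  refine ⟨C, D, hC, hD, hCD, rfl, ?_⟩
  have hQn : 0 ≤ Q ^ n := by positivity
  calc Metric.diam (C ∪ D) ≤ Metric.diam C + dist b x + Metric.diam D := Metric.diam_union hb hx
    _ ≤ Q ^ n / 2 + Q ^ (n + 1) / 3 + Q ^ n / 2 := by linarith [hC.diam_le_s2, hD.diam_le_s2]
    _ ≤ Q ^ (n + 1) / 2 := by rw [pow_succ]; nlinarith

end Chunks

section SetEDist

variable {X : Type*} [MetricSpace X]

theorem setEDist_le_edist {U W : Set X} {u w : X} (hu : u ∈ U) (hw : w ∈ W) :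
    setEDist U W ≤ edist u w :=
  (iInf₂_le u hu).trans (iInf₂_le w hw)

theorem setEDist_comm (U W : Set X) : setEDist U W = setEDist W U :=
  le_antisymm
    (le_iInf₂ fun _ hw => le_iInf₂ fun _ hu => (setEDist_le_edist hu hw).trans_eq (edist_comm _ _))
    (le_iInf₂ fun _ hu => le_iInf₂ fun _ hw => (setEDist_le_edist hw hu).trans_eq (edist_comm _ _))

theorem setEDist_mono_left {U U' W : Set X} (h : U' ⊆ U) : setEDist U W ≤ setEDist U' W :=
  le_iInf₂ fun _ hu => le_iInf₂ fun _ hw => setEDist_le_edist (h hu) hw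

theorem lt_biInf_of_finite {α β : Type*} [CompleteLinearOrder β] {s : Set α} (hs : s.Finite)
    {f : α → β} {c : β} (hc : c < ⊤) (h : ∀ x ∈ s, c < f x) : c < ⨅ x ∈ s, f x := by
  rcases s.eq_empty_or_nonempty with rfl | hne
  · simpa using hc
  · obtain ⟨a, ha, hmin⟩ := s.exists_min_image f hs hne
    exact (h a ha).trans_le (le_iInf₂ hmin)

theorem lt_setEDist_of_finite {U W : Set X} (hU : U.Finite) (hW : W.Finite) {c : ℝ≥0∞}
    (hc : c < ⊤) (h : ∀ u ∈ U, ∀ w ∈ W, c < edist u w) : c < setEDist U W :=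
  lt_biInf_of_finite hU hc fun u hu => lt_biInf_of_finite hW hc (h u hu)

end SetEDist

theorem IsLConnected.insert_of_edist_le {X : Type*} [MetricSpace X] {l : ℝ} {M : Set X}
    (hM : IsLConnected l M) {b x : X} (hbM : b ∉ M) (hx : x ∈ M)
    (hbx : edist b x ≤ ENNReal.ofReal l) : IsLConnected l (insert b M) := by
  have key : ∀ N₁ N₂ : Set X, N₂.Nonempty → Disjoint N₁ N₂ → N₁ ∪ N₂ = insert b M → b ∈ N₁ →
      setEDist N₁ N₂ ≤ ENNReal.ofReal l := by
    intro N₁ N₂ hN₂ hdisj hunion hb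
    have hmem : ∀ y, y ∈ N₁ ∨ y ∈ N₂ ↔ y = b ∨ y ∈ M := fun y => Set.ext_iff.mp hunion y
    by_cases hxN₂ : x ∈ N₂
    · exact (setEDist_le_edist hb hxN₂).trans hbx
    have hxN₁ : x ∈ N₁ \ {b} := ⟨by grind, fun h => hbM (h ▸ hx)⟩
    have hpart : N₁ \ {b} ∪ N₂ = M := by
      ext y
      have : y ∈ N₁ → y ∉ N₂ := fun h => Set.disjoint_left.mp hdisj h
      simp only [Set.mem_union, Set.mem_sdiff, Set.mem_singleton_iff]
      grind
    exact (setEDist_mono_left Set.sdiff_subset).trans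
      (hM.2 _ _ ⟨x, hxN₁⟩ hN₂ (hdisj.mono_left Set.sdiff_subset) hpart)
  refine ⟨⟨b, Set.mem_insert _ _⟩, fun M₁ M₂ h₁ h₂ hdisj hunion => ?_⟩
  rcases (hunion ▸ Set.mem_insert b M : b ∈ M₁ ∪ M₂) with hb | hb
  · exact key M₁ M₂ h₂ hdisj hunion hb
  · rw [setEDist_comm]
    exact key M₂ M₁ h₁ hdisj.symm (Set.union_comm M₁ M₂ ▸ hunion) hb

theorem lt_dist_of_maximal {X : Type*} [MetricSpace X] {Q : ℝ} (hQ : 6 ≤ Q) {ε : Set X}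
    (hε : ε.Finite) {i : ℕ} {M : Set X} (hM : M ⊆ Flevel Q ε i) (hconn : IsLConnected (Q ^ i) M)
    (hmax : ∀ M' : Set X, M' ⊆ Elevel Q ε i → IsLConnected (Q ^ i) M' → M ⊆ M' → M' = M)
    {b x : X} (hb : b ∈ Elevel Q ε i \ M) (hx : x ∈ M) : Q ^ (i + 1) / 3 < dist b x := by
  by_contra! hbx
  obtain ⟨C, hC, hbC⟩ := hb.1
  obtain ⟨⟨D, hD, hxD⟩, hxF⟩ := hM hx
  by_cases hCD : Disjoint C D
  · exact hxF ⟨C ∪ D, hC.union_of_disjoint hQ hD hCD hbC hxD hbx, Or.inr hxD⟩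
  · have hedist : edist b x ≤ ENNReal.ofReal (Q ^ i) := by
      rw [edist_dist]
      exact ENNReal.ofReal_le_ofReal (hC.dist_le_of_not_disjoint_s2 hε hD hCD hbC hxD)
    have hins := hmax (insert b M) (Set.insert_subset hb.1 fun y hy => (hM hy).1)
      (hconn.insert_of_edist_le hb.2 hx hedist) (Set.subset_insert b M)
    exact hb.2 (hins ▸ Set.mem_insert b M)

theorem statement2 {X : Type*} [MetricSpace X] (Q : ℝ) (hQ : 6 ≤ Q)
    (ε : Set X) (hε : ε.Finite) (i : ℕ) (M : Set X)
    (hM : M ⊆ Flevel Q ε i) (hconn : IsLConnected (Q ^ i) M)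
    (hmax : ∀ M' : Set X, M' ⊆ Elevel Q ε i → IsLConnected (Q ^ i) M' → M ⊆ M' → M' = M) :
    (∀ b ∈ Elevel Q ε i \ M, ENNReal.ofReal (Q ^ (i + 1) / 3) < setEDist {b} M) ∧
      ENNReal.ofReal (Q ^ (i + 1) / 3) < setEDist M (Elevel Q ε i \ M) := by
  have hfar : ∀ b ∈ Elevel Q ε i \ M, ∀ x ∈ M, ENNReal.ofReal (Q ^ (i + 1) / 3) < edist b x :=
    fun b hb x hx => by
      have hlt := lt_dist_of_maximal hQ hε hM hconn hmax hb hx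
      rw [edist_dist]
      exact (ENNReal.ofReal_lt_ofReal_iff ((by positivity : (0 : ℝ) ≤ _).trans_lt hlt)).mpr hlt
  have hMfin : M.Finite := hε.subset fun _ hx => Elevel_subset i (hM hx).1
  have hrestfin : (Elevel Q ε i \ M).Finite := hε.subset fun _ hx => Elevel_subset i hx.1
  refine ⟨fun b hb => lt_setEDist_of_finite (Set.finite_singleton b) hMfin ENNReal.ofReal_lt_top
      fun _ hb' => hb' ▸ hfar b hb, ?_⟩
  exact lt_setEDist_of_finite hMfin hrestfin ENNReal.ofReal_lt_top
    fun x hx b hb => edist_comm x b ▸ hfar b hb x hx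
end

section
/- Suppose there exist constants d₀ ≥ 1 and c_B ≥ 1 such that for every v ∈ X and all radii 0 < r < R there exists U ⊆ X with |U| ≤ c_B (R/r)^{d₀} and B_v(R) ⊆ ⋃_{u∈U} B_u(r). Let s = max_{v∈X} |B_v(1/2)| and λ = (2Q)^{d₀} c_B. Then for every integer n ≥ 0, the probability that ε contains at least one level-n chunk is at most |X| · λ^{−2} · (λ² s p)^{2^n}. -/
open scoped ENNReal

/-- The Bernoulli(`p`) product measure: each point of `X` is included in the random subset
independently with probability `p` (for `p ∈ [0,1]`); a random subset is encoded as its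
indicator function `f : X → Bool`, the subset being `{x | f x = true}`. -/
noncomputable def bernoulliProduct (X : Type*) [Fintype X] (p : ℝ) :
    MeasureTheory.Measure (X → Bool) :=
  MeasureTheory.Measure.pi fun _ =>
    (PMF.bernoulli (min (Real.toNNReal p) 1) (min_le_right _ _)).toMeasure

/-! A level-`n` chunk of `ε` is a set of `2 ^ n` points of `ε` which is also a level-`n` chunk
of the whole space, so a union bound over these "shapes" gives probability at most `p ^ 2 ^ n`
times their number. A level-`(m + 1)` shape through `v` is the union of a level-`m` shape
through `v` and a level-`m` shape through some `u` with `d(v, u) < Q ^ (m + 1)`. Covering that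
ball by `λ ^ (m + 1)` balls of radius `1/2` bounds it by `λ ^ (m + 1) s` points, so the numbers
`N_m` of shapes through a point satisfy `N_0 = 1` and `N_{m+1} ≤ λ ^ (m + 1) s N_m ^ 2`, whence
`N_m ≤ (s λ ^ 2) ^ 2 ^ m / (s λ ^ (m + 2))`. -/

open Finset Metric MeasureTheory

namespace IsChunk

variable {X : Type*} [MetricSpace X] {Q : ℝ} {ε : Set X}

theorem subset_s8 : ∀ {n : ℕ} {C : Set X}, IsChunk Q ε n C → C ⊆ ε
  | 0, _, ⟨_, hx, hC⟩ => hC ▸ Set.singleton_subset_iff.2 hx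
  | _ + 1, _, ⟨_, _, hA, hB, _, hC, _⟩ => hC ▸ Set.union_subset hA.subset_s8 hB.subset_s8

theorem mono {ε' : Set X} (hε : ε ⊆ ε') :
    ∀ {n : ℕ} {C : Set X}, IsChunk Q ε n C → IsChunk Q ε' n C
  | 0, _, ⟨x, hx, hC⟩ => ⟨x, hε hx, hC⟩
  | _ + 1, _, ⟨A, B, hA, hB, hAB, hC, hdiam⟩ => ⟨A, B, hA.mono hε, hB.mono hε, hAB, hC, hdiam⟩

theorem encard_eq : ∀ {n : ℕ} {C : Set X}, IsChunk Q ε n C → C.encard = 2 ^ n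
  | 0, _, ⟨_, _, hC⟩ => by simp [hC]
  | n + 1, _, ⟨_, _, hA, hB, hAB, hC, _⟩ => by
    rw [hC, Set.encard_union_eq hAB, hA.encard_eq, hB.encard_eq, pow_succ, mul_two]

theorem nonempty {n : ℕ} {C : Set X} (h : IsChunk Q ε n C) : C.Nonempty := by
  rw [← Set.encard_pos, h.encard_eq]
  positivity

theorem card_eq {n : ℕ} {A : Finset X} (h : IsChunk Q ε n (A : Set X)) : #A = 2 ^ n := by
  exact_mod_cast (Set.encard_coe_eq_coe_finsetCard A).symm.trans h.encard_eq

end IsChunk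

section Covering

variable {X : Type*} [MetricSpace X] [Finite X]

theorem ncard_ball_le_of_subset_biUnion {v : X} {R r : ℝ} {U : Finset X} {s : ℕ}
    (hU : ball v R ⊆ ⋃ u ∈ U, ball u r) (hs : ∀ u : X, (ball u r).ncard ≤ s) :
    (ball v R).ncard ≤ #U * s :=
  calc (ball v R).ncard ≤ (⋃ u ∈ U, ball u r).ncard := Set.ncard_le_ncard hU
    _ ≤ ∑ u ∈ U, (ball u r).ncard := U.set_ncard_biUnion_le _
    _ ≤ #U * s := by simpa using Finset.sum_le_card_nsmul U _ s fun u _ => hs u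

theorem mul_div_half_rpow_le {Q d c : ℝ} (hQ : 1 ≤ Q) (hd : 0 ≤ d) (hc : 1 ≤ c) (m : ℕ) :
    c * (Q ^ (m + 1) / (1 / 2)) ^ d ≤ ((2 * Q) ^ d * c) ^ (m + 1) := by
  have hscale : Q ^ (m + 1) / (1 / 2) ≤ (2 * Q) ^ (m + 1) := by
    rw [mul_pow, div_div_eq_mul_div, div_one, mul_comm]
    gcongr
    exact le_self_pow₀ one_le_two (Nat.succ_ne_zero m)
  calc c * (Q ^ (m + 1) / (1 / 2)) ^ d ≤ c * ((2 * Q) ^ (m + 1)) ^ d := by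
        gcongr
    _ = c * ((2 * Q) ^ d) ^ (m + 1) := by rw [Real.rpow_pow_comm (by positivity)]
    _ ≤ c ^ (m + 1) * ((2 * Q) ^ d) ^ (m + 1) := by
        gcongr
        exact le_self_pow₀ hc (Nat.succ_ne_zero m)
    _ = ((2 * Q) ^ d * c) ^ (m + 1) := by rw [mul_pow, mul_comm]

theorem ncard_ball_pow_le {Q d c : ℝ} {s : ℕ} (hQ : 1 ≤ Q) (hd : 0 ≤ d) (hc : 1 ≤ c)
    (hcover : ∀ (v : X) (r R : ℝ), 0 < r → r < R →
      ∃ U : Finset X, (#U : ℝ) ≤ c * (R / r) ^ d ∧ ball v R ⊆ ⋃ u ∈ U, ball u r)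
    (hs : ∀ u : X, (ball u (1 / 2)).ncard ≤ s) (m : ℕ) (v : X) :
    ((ball v (Q ^ (m + 1))).ncard : ℝ) ≤ ((2 * Q) ^ d * c) ^ (m + 1) * s := by
  have hR : (1 / 2 : ℝ) < Q ^ (m + 1) := by linarith [one_le_pow₀ (n := m + 1) hQ]
  obtain ⟨U, hUcard, hU⟩ := hcover v (1 / 2) (Q ^ (m + 1)) one_half_pos hR
  calc ((ball v (Q ^ (m + 1))).ncard : ℝ) ≤ #U * s := by
        exact_mod_cast ncard_ball_le_of_subset_biUnion hU hs
    _ ≤ ((2 * Q) ^ d * c) ^ (m + 1) * s := by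
        gcongr
        exact hUcard.trans (mul_div_half_rpow_le hQ hd hc m)

end Covering

section Counting

open scoped Classical

variable {X : Type*} [MetricSpace X] [Fintype X]

noncomputable def chunkShapesThrough (Q : ℝ) (n : ℕ) (v : X) : Finset (Finset X) :=
  {A | IsChunk Q Set.univ n (A : Set X) ∧ v ∈ A}

variable {Q : ℝ}

theorem mem_chunkShapesThrough {n : ℕ} {v : X} {A : Finset X} :
    A ∈ chunkShapesThrough Q n v ↔ IsChunk Q Set.univ n (A : Set X) ∧ v ∈ A := by
  simp [chunkShapesThrough]

theorem chunkShapesThrough_zero (v : X) : chunkShapesThrough Q 0 v = {{v}} := by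
  ext A
  simp only [mem_chunkShapesThrough, IsChunk, Set.mem_univ, true_and, Finset.coe_eq_singleton,
    Finset.mem_singleton]
  constructor
  · rintro ⟨⟨x, rfl⟩, hv⟩
    rw [Finset.mem_singleton.1 hv]
  · rintro rfl
    exact ⟨⟨v, rfl⟩, Finset.mem_singleton_self v⟩

theorem chunkShapesThrough_succ_subset (hQ : 0 < Q) (m : ℕ) (v : X) :
    chunkShapesThrough Q (m + 1) v ⊆
      (chunkShapesThrough Q m v ×ˢ
        (ball v (Q ^ (m + 1))).toFinset.biUnion (chunkShapesThrough Q m)).image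
        fun BC => BC.1 ∪ BC.2 := by
  intro A hA
  obtain ⟨⟨B, C, hB, hC, -, hBC, hdiam⟩, hvA⟩ := mem_chunkShapesThrough.1 hA
  wlog hvB : v ∈ B generalizing B C
  · have hvC : v ∈ C := (hBC ▸ Finset.mem_coe.2 hvA : v ∈ B ∪ C).resolve_left hvB
    exact this C B hC hB (hBC.trans (Set.union_comm B C)) hvC
  obtain ⟨u, hu⟩ := hC.nonempty
  have hvu : dist v u < Q ^ (m + 1) := by
    calc dist v u ≤ diam (A : Set X) :=
          dist_le_diam_of_mem A.finite_toSet.isBounded (hBC ▸ .inl hvB) (hBC ▸ .inr hu)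
      _ ≤ Q ^ (m + 1) / 2 := hdiam
      _ < Q ^ (m + 1) := half_lt_self (pow_pos hQ _)
  refine Finset.mem_image.2 ⟨(B.toFinset, C.toFinset), Finset.mem_product.2 ⟨?_, ?_⟩, ?_⟩
  · exact mem_chunkShapesThrough.2 ⟨by rwa [Set.coe_toFinset], Set.mem_toFinset.2 hvB⟩
  · refine Finset.mem_biUnion.2 ⟨u, Set.mem_toFinset.2 (mem_ball'.2 hvu), ?_⟩
    exact mem_chunkShapesThrough.2 ⟨by rwa [Set.coe_toFinset], Set.mem_toFinset.2 hu⟩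
  · exact Finset.coe_injective (by rw [hBC, Finset.coe_union, Set.coe_toFinset, Set.coe_toFinset])

theorem card_chunkShapesThrough_succ_le (hQ : 0 < Q) (m : ℕ) (v : X) :
    #(chunkShapesThrough Q (m + 1) v) ≤
      #(chunkShapesThrough Q m v) *
        ∑ u ∈ (ball v (Q ^ (m + 1))).toFinset, #(chunkShapesThrough Q m u) :=
  calc #(chunkShapesThrough Q (m + 1) v)
      ≤ #(chunkShapesThrough Q m v ×ˢ
          (ball v (Q ^ (m + 1))).toFinset.biUnion (chunkShapesThrough Q m)) :=
        (Finset.card_le_card (chunkShapesThrough_succ_subset hQ m v)).trans Finset.card_image_le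
    _ ≤ _ := by
      rw [Finset.card_product]
      exact Nat.mul_le_mul_left _ Finset.card_biUnion_le

theorem card_chunkShapesThrough_le {s lam : ℝ} (hQ : 0 < Q) (hs : 0 < s) (hlam : 0 < lam)
    (hball : ∀ (m : ℕ) (v : X), ((ball v (Q ^ (m + 1))).ncard : ℝ) ≤ lam ^ (m + 1) * s)
    (n : ℕ) (v : X) :
    (#(chunkShapesThrough Q n v) : ℝ) ≤ (s * lam ^ 2) ^ 2 ^ n / (s * lam ^ (n + 2)) := by
  induction n generalizing v with
  | zero => simp [chunkShapesThrough_zero, hs.ne', hlam.ne']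
  | succ m ih =>
    set b := (s * lam ^ 2) ^ 2 ^ m / (s * lam ^ (m + 2))
    have hb : 0 ≤ b := by positivity
    calc (#(chunkShapesThrough Q (m + 1) v) : ℝ)
        ≤ #(chunkShapesThrough Q m v) *
            ∑ u ∈ (ball v (Q ^ (m + 1))).toFinset, (#(chunkShapesThrough Q m u) : ℝ) := by
          exact_mod_cast card_chunkShapesThrough_succ_le hQ m v
      _ ≤ b * ∑ _u ∈ (ball v (Q ^ (m + 1))).toFinset, b :=
          mul_le_mul (ih v) (Finset.sum_le_sum fun u _ => ih u)
            (Finset.sum_nonneg fun _ _ => by positivity) hb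
      _ = b * ((ball v (Q ^ (m + 1))).ncard * b) := by
          rw [Finset.sum_const, nsmul_eq_mul, Set.ncard_eq_toFinset_card']
      _ ≤ b * (lam ^ (m + 1) * s * b) := by gcongr; exact hball m v
      _ = (s * lam ^ 2) ^ 2 ^ (m + 1) / (s * lam ^ (m + 1 + 2)) := by
          simp only [b]
          field_simp
          ring

theorem card_chunkShapesThrough_le_of_cover {d c : ℝ} {s : ℕ} (hQ : 1 ≤ Q) (hd : 0 ≤ d)
    (hc : 1 ≤ c)
    (hcover : ∀ (v : X) (r R : ℝ), 0 < r → r < R →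
      ∃ U : Finset X, (#U : ℝ) ≤ c * (R / r) ^ d ∧ ball v R ⊆ ⋃ u ∈ U, ball u r)
    (hs : ∀ u : X, (ball u (1 / 2)).ncard ≤ s) (n : ℕ) (v : X) :
    (#(chunkShapesThrough Q n v) : ℝ) ≤
      (s * ((2 * Q) ^ d * c) ^ 2) ^ 2 ^ n / ((2 * Q) ^ d * c) ^ 2 := by
  set lam := (2 * Q) ^ d * c
  have hlam : 1 ≤ lam := one_le_mul_of_one_le_of_one_le (Real.one_le_rpow (by linarith) hd) hc
  have hs1 : (1 : ℝ) ≤ s := by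
    exact_mod_cast ((Set.ncard_pos).2 ⟨v, mem_ball_self one_half_pos⟩).trans_le (hs v)
  calc (#(chunkShapesThrough Q n v) : ℝ) ≤ (s * lam ^ 2) ^ 2 ^ n / (s * lam ^ (n + 2)) :=
        card_chunkShapesThrough_le (by linarith) (by linarith) (by linarith)
          (ncard_ball_pow_le hQ hd hc hcover hs) n v
    _ ≤ (s * lam ^ 2) ^ 2 ^ n / lam ^ 2 := by
        gcongr
        calc lam ^ 2 ≤ lam ^ (n + 2) := pow_le_pow_right₀ hlam (by omega)
          _ ≤ s * lam ^ (n + 2) := le_mul_of_one_le_left (by positivity) hs1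

end Counting

section Bernoulli

variable {X : Type*} [Fintype X] {p : ℝ}

theorem bernoulliProduct_forall_true (hp1 : p ≤ 1) (A : Finset X) :
    bernoulliProduct X p {f | ∀ x ∈ A, f x = true} = ENNReal.ofReal p ^ #A := by
  change bernoulliProduct X p ((A : Set X).pi fun _ => {true}) = _
  have hmin : min (Real.toNNReal p) 1 = Real.toNNReal p := min_eq_left (by simpa using hp1)
  simp [bernoulliProduct, PMF.bernoulli_apply, hmin, ENNReal.ofReal]

end Bernoulli

section UnionBound

open scoped Classical

variable {X : Type*} [MetricSpace X] [Fintype X] {p : ℝ}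

theorem bernoulliProduct_exists_chunk_le (hp0 : 0 ≤ p) (hp1 : p ≤ 1) (Q : ℝ) (n : ℕ) :
    bernoulliProduct X p {f : X → Bool | ∃ C : Set X, IsChunk Q {x | f x = true} n C} ≤
      ENNReal.ofReal (∑ v : X, (#(chunkShapesThrough Q n v) : ℝ) * p ^ 2 ^ n) := by
  have hcover : {f : X → Bool | ∃ C : Set X, IsChunk Q {x | f x = true} n C} ⊆
      ⋃ v, ⋃ A ∈ chunkShapesThrough Q n v, {f | ∀ x ∈ A, f x = true} := by
    rintro f ⟨C, hC⟩
    obtain ⟨v, hv⟩ := hC.nonempty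
    simp only [Set.mem_iUnion]
    refine ⟨v, C.toFinset, mem_chunkShapesThrough.2 ⟨?_, Set.mem_toFinset.2 hv⟩,
      fun x hx => hC.subset_s8 (Set.mem_toFinset.1 hx)⟩
    rw [Set.coe_toFinset]
    exact hC.mono (Set.subset_univ _)
  calc bernoulliProduct X p {f | ∃ C, IsChunk Q {x | f x = true} n C}
      ≤ ∑ v, ∑ A ∈ chunkShapesThrough Q n v, bernoulliProduct X p {f | ∀ x ∈ A, f x = true} :=
        (measure_mono hcover).trans <| (measure_iUnion_fintype_le _ _).trans <|
          Finset.sum_le_sum fun v _ => measure_biUnion_finset_le _ _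
    _ = ∑ v, (#(chunkShapesThrough Q n v) : ℝ≥0∞) * ENNReal.ofReal p ^ 2 ^ n := by
        refine Finset.sum_congr rfl fun v _ => ?_
        rw [Finset.sum_congr rfl fun A hA => by
          rw [bernoulliProduct_forall_true hp1, (mem_chunkShapesThrough.1 hA).1.card_eq],
          Finset.sum_const, nsmul_eq_mul]
    _ = ENNReal.ofReal (∑ v : X, (#(chunkShapesThrough Q n v) : ℝ) * p ^ 2 ^ n) := by
        rw [ENNReal.ofReal_sum_of_nonneg fun _ _ => by positivity]
        simp [ENNReal.ofReal_mul, ENNReal.ofReal_pow hp0]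

end UnionBound

theorem statement8 {X : Type*} [MetricSpace X] [Fintype X] (Q p d₀ c_B : ℝ)
    (hQ : 6 ≤ Q) (hp0 : 0 ≤ p) (hp1 : p ≤ 1) (hd : 1 ≤ d₀) (hc : 1 ≤ c_B)
    (hcover : ∀ (v : X) (r R : ℝ), 0 < r → r < R →
      ∃ U : Finset X, (U.card : ℝ) ≤ c_B * (R / r) ^ d₀ ∧
        Metric.ball v R ⊆ ⋃ u ∈ U, Metric.ball (u : X) r)
    (s : ℕ) (hs : s = Finset.univ.sup fun v : X => (Metric.ball v (1 / 2 : ℝ)).ncard)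
    (lam : ℝ) (hlam : lam = (2 * Q) ^ d₀ * c_B) (n : ℕ) :
    bernoulliProduct X p {f | ∃ C : Set X, IsChunk Q {x | f x = true} n C} ≤
      ENNReal.ofReal ((Fintype.card X : ℝ) * (lam ^ 2)⁻¹ * (lam ^ 2 * s * p) ^ 2 ^ n) := by
  have hs_ball (u : X) : (ball u (1 / 2)).ncard ≤ s :=
    hs ▸ Finset.le_sup (f := fun v : X => (ball v (1 / 2 : ℝ)).ncard) (Finset.mem_univ u)
  have hcount (v : X) : (#(chunkShapesThrough Q n v) : ℝ) ≤ (s * lam ^ 2) ^ 2 ^ n / lam ^ 2 :=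
    hlam ▸ card_chunkShapesThrough_le_of_cover (by linarith) (by linarith) hc hcover hs_ball n v
  refine (bernoulliProduct_exists_chunk_le hp0 hp1 Q n).trans (ENNReal.ofReal_le_ofReal ?_)
  rw [mul_assoc, ← nsmul_eq_mul, ← Finset.card_univ]
  refine Finset.sum_le_card_nsmul _ _ _ fun v _ => ?_
  calc (#(chunkShapesThrough Q n v) : ℝ) * p ^ 2 ^ n
      ≤ (s * lam ^ 2) ^ 2 ^ n / lam ^ 2 * p ^ 2 ^ n := by gcongr; exact hcount v
    _ = (lam ^ 2)⁻¹ * (lam ^ 2 * s * p) ^ 2 ^ n := by ring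
end

section
/- For all u, w ∈ V, the following are equivalent: (i) u ⪯ w, i.e., w − u is a finite sum (with repetitions allowed, possibly empty) of elements of S; (ii) (w₁−u₁)+(w₂−u₂) ≥ 0, (w₁−u₁)+(w₃−u₃) ≥ 0, and (w₂−u₂)+(w₃−u₃) ≥ 0. -/
/-- The vertex set of the body-centered cubic lattice:
integer triples whose coordinates all have the same parity. -/
def bccVertices : Set (ℤ × ℤ × ℤ) :=
  {v | v.1 ≡ v.2.1 [ZMOD 2] ∧ v.2.1 ≡ v.2.2 [ZMOD 2]}

/-- The causal steps of the bcc lattice with respect to the sweep direction `t = (1,1,1)`: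
the edge vectors having positive inner product with `t`. -/
def causalSteps : Set (ℤ × ℤ × ℤ) :=
  {(2, 0, 0), (0, 2, 0), (0, 0, 2), (1, 1, 1), (1, 1, -1), (1, -1, 1), (-1, 1, 1)}

/-- `u ⪯ w` iff `w - u` is a finite sum (with repetitions allowed, possibly empty)
of causal steps, i.e. `w - u` lies in the additive submonoid generated by them. -/
def sweepLE (u w : ℤ × ℤ × ℤ) : Prop :=
  w - u ∈ AddSubmonoid.closure causalSteps

/-!
Every causal step has nonnegative pairwise coordinate sums, and these inequalities are
preserved under addition, which gives one direction. Conversely, the three steps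
`(1,1,-1)`, `(1,-1,1)`, `(-1,1,1)` have pairwise-sum vectors `(2,0,0)`, `(0,2,0)`, `(0,0,2)`, so
a lattice vector `(a,b,c)` (all coordinates of equal parity, hence all pairwise sums even) equals
`(a+b)/2 • (1,1,-1) + (a+c)/2 • (1,-1,1) + (b+c)/2 • (-1,1,1)`.
-/

def pairSumCone : AddSubmonoid (ℤ × ℤ × ℤ) where
  carrier := {d | 0 ≤ d.1 + d.2.1 ∧ 0 ≤ d.1 + d.2.2 ∧ 0 ≤ d.2.1 + d.2.2}
  zero_mem' := by simp
  add_mem' := by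
    rintro ⟨a, b, c⟩ ⟨a', b', c'⟩ ⟨h₁, h₂, h₃⟩ ⟨h₁', h₂', h₃'⟩
    simp only [Set.mem_ofPred_eq, Prod.mk_add_mk] at *
    omega

theorem closure_causalSteps_le_pairSumCone :
    AddSubmonoid.closure causalSteps ≤ pairSumCone := by
  rw [AddSubmonoid.closure_le]
  simp only [causalSteps, Set.insert_subset_iff, Set.singleton_subset_iff]
  norm_num [pairSumCone]

theorem sub_mem_bccVertices {v w : ℤ × ℤ × ℤ} (hv : v ∈ bccVertices) (hw : w ∈ bccVertices) :
    v - w ∈ bccVertices :=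
  ⟨hv.1.sub hw.1, hv.2.sub hw.2⟩

theorem mem_closure_causalSteps_of_mem_pairSumCone {d : ℤ × ℤ × ℤ} (hd : d ∈ bccVertices)
    (hcone : d ∈ pairSumCone) : d ∈ AddSubmonoid.closure causalSteps := by
  obtain ⟨a, b, c⟩ := d
  obtain ⟨hab, hbc⟩ := hd
  obtain ⟨h₁, h₂, h₃⟩ := hcone
  simp only [Int.ModEq] at hab hbc h₁ h₂ h₃
  have hstep : ∀ s ∈ causalSteps, ∀ n : ℕ, n • s ∈ AddSubmonoid.closure causalSteps :=
    fun s hs n => nsmul_mem (AddSubmonoid.subset_closure hs) n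
  have hdecomp : ((a, b, c) : ℤ × ℤ × ℤ) =
      ((a + b) / 2).toNat • (1, 1, -1) + ((a + c) / 2).toNat • (1, -1, 1) +
        ((b + c) / 2).toNat • (-1, 1, 1) := by
    simp only [Prod.smul_mk, nsmul_eq_mul, Prod.mk_add_mk, Prod.mk.injEq]
    omega
  rw [hdecomp]
  refine add_mem (add_mem ?_ ?_) ?_ <;> exact hstep _ (by simp [causalSteps]) _

theorem mem_closure_causalSteps_iff {d : ℤ × ℤ × ℤ} (hd : d ∈ bccVertices) :
    d ∈ AddSubmonoid.closure causalSteps ↔ d ∈ pairSumCone :=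
  ⟨fun h => closure_causalSteps_le_pairSumCone h,
    mem_closure_causalSteps_of_mem_pairSumCone hd⟩

theorem statement12 (u w : ℤ × ℤ × ℤ) (hu : u ∈ bccVertices) (hw : w ∈ bccVertices) :
    sweepLE u w ↔
      0 ≤ (w.1 - u.1) + (w.2.1 - u.2.1) ∧
      0 ≤ (w.1 - u.1) + (w.2.2 - u.2.2) ∧
      0 ≤ (w.2.1 - u.2.1) + (w.2.2 - u.2.2) :=
  mem_closure_causalSteps_iff (sub_mem_bccVertices hw hu)
end
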